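/- If a link diagram D is adequate, then in the Kauffman bracket state sum the maximal degree contribution c(D) + 2(|s_A|-1) of the all-A state is not cancelled: every state s ≠ s_A contributes maximal A-degree strictly less than c(D) + 2(|s_A|-1), given that any state with exactly one B-smoothing has |s| = |s_A| - 1 < |s_A|, and changing one smoothing changes |s| by ±1. -/
import Mathlib


/-- Number of A-smoothings of a state (`false` = A-smoothing). -/
def aCount {n : ℕ} (s : Fin n → Bool) : ℕ := (Finset.univ.filter fun i => s i = false).card

/-- Number of B-smoothings of a state (`true` = B-smoothing). -/
def bCount {n : ℕ} (s : Fin n → Bool) : ℕ := (Finset.univ.filter fun i => s i = true).card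

lemma aCount_add_bCount {n : ℕ} (s : Fin n → Bool) : aCount s + bCount s = n := by
  classical
  unfold aCount bCount
  have : (Finset.univ.filter fun i => s i = false)
      = (Finset.univ.filter fun i => ¬ s i = true) := by
    apply Finset.filter_congr
    intro i _
    simp
  rw [this, add_comm, Finset.card_filter_add_card_filter_not]
  simp

lemma bCount_update {n : ℕ} (s : Fin n → Bool) (i : Fin n) (hi : s i = true) :
    bCount (Function.update s i false) + 1 = bCount s := by
  classical
  unfold bCount
  have h1 : (Finset.univ.filter fun j => Function.update s i false j = true)
      = (Finset.univ.filter fun j => s j = true).erase i := by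
    ext j
    rcases eq_or_ne j i with rfl | hj
    · simp [Function.update_self]
    · simp [Function.update_of_ne hj, hj]
  rw [h1, Finset.card_erase_of_mem (by simp [hi])]
  have : i ∈ Finset.univ.filter fun j => s j = true := by simp [hi]
  have hpos : 0 < (Finset.univ.filter fun j => s j = true).card :=
    Finset.card_pos.mpr ⟨i, this⟩
  omega

lemma key {n : ℕ}
    (circles : (Fin n → Bool) → ℕ)
    (hadj : ∀ (s : Fin n → Bool) (i : Fin n),
      circles (Function.update s i (!s i)) = circles s + 1 ∨
      circles s = circles (Function.update s i (!s i)) + 1)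
    (hadequate : ∀ s : Fin n → Bool, bCount s = 1 →
      circles s + 1 = circles (fun _ => false)) :
    ∀ b : ℕ, ∀ s : Fin n → Bool, bCount s = b + 1 →
      circles s + 2 ≤ circles (fun _ => false) + (b + 1) := by
  intro b
  induction b with
  | zero =>
    intro s hs
    have := hadequate s hs
    omega
  | succ b ih =>
    intro s hs
    have hex : ∃ i, s i = true := by
      by_contra h
      push_neg at h
      have : bCount s = 0 := by
        unfold bCount
        rw [Finset.card_eq_zero]
        ext i
        simp [h i]
      omega
    obtain ⟨i, hi⟩ := hex
    set s' := Function.update s i false with hs'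
    have hb' : bCount s' = b + 1 := by
      have h := bCount_update s i hi
      rw [← hs'] at h
      omega
    have hIH := ih s' hb'
    have hupd : Function.update s i (!s i) = s' := by
      rw [hi]
      rfl
    have := hadj s i
    rw [hupd] at this
    omega

/-- If a link diagram `D` with `n` crossings is adequate (here we use
A-adequacy: any state with exactly one B-smoothing has `|s| = |s_A| - 1 < |s_A|`), then in
the Kauffman bracket state sum the maximal degree contribution `n + 2(|s_A| - 1)` of the
all-A state is not cancelled: every state `s ≠ s_A` contributes maximal A-degree
`a(s) - b(s) + 2(|s| - 1)` strictly less than `n + 2(|s_A| - 1)`.  States are functions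
`Fin n → Bool` (`false` = A), with circle count `circles` changing by exactly `±1` when one
smoothing is changed. -/
theorem adequate_no_cancellation (n : ℕ)
    (circles : (Fin n → Bool) → ℕ)
    (hpos : ∀ s, 1 ≤ circles s)
    (hadj : ∀ (s : Fin n → Bool) (i : Fin n),
      circles (Function.update s i (!s i)) = circles s + 1 ∨
      circles s = circles (Function.update s i (!s i)) + 1)
    (hadequate : ∀ s : Fin n → Bool, bCount s = 1 →
      circles s + 1 = circles (fun _ => false)) :
    ∀ s : Fin n → Bool, s ≠ (fun _ => false) →
      (aCount s : ℤ) - bCount s + 2 * ((circles s : ℤ) - 1)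
        < (n : ℤ) + 2 * ((circles (fun _ => false) : ℤ) - 1) := by
  intro s hne
  have hb : 1 ≤ bCount s := by
    by_contra h
    push_neg at h
    apply hne
    funext i
    by_contra hi
    have : s i = true := by
      cases hsi : s i
      · exact absurd hsi hi
      · rfl
    have : i ∈ Finset.univ.filter fun j => s j = true := by simp [this]
    have := Finset.card_pos.mpr ⟨i, this⟩
    unfold bCount at h
    omega
  obtain ⟨b, hbeq⟩ : ∃ b, bCount s = b + 1 := ⟨bCount s - 1, by omega⟩
  have hkey := key circles hadj hadequate b s hbeq
  have hab := aCount_add_bCount s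
  have h1 : (aCount s : ℤ) + bCount s = n := by exact_mod_cast hab
  have h2 : (circles s : ℤ) + 2 ≤ circles (fun _ => false) + (b + 1) := by
    exact_mod_cast hkey
  have h3 : (bCount s : ℤ) = b + 1 := by exact_mod_cast hbeq
  omega
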